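/- Suppose for each j ∈ {1,...,s}: the outer code condition holds (every nonzero codeword b_j of B_j^⊥, read blockwise over F_4^m, has at least k_j + 1 nonzero blocks) and the inner condition holds (every vector of C_j^⊥ \ C_j has Hamming weight ≥ δ_j n₂), with nested inner codes C_s ⊆ ... ⊆ C_1 and compatible symplectic identification ρ: F_4^{sm} → C_s^⊥/C_s mapping the j-th block-group into π_s(C_j^⊥). Then every vector c in the generalized concatenated code difference C^⊥ \ C has Hamming weight at least min_{1≤j≤s} δ_j n₂ (k_j + 1). -/
import Mathlib


abbrev F4 := GaloisField 2 2

/-- The trace inner product on F_4^N. -/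
noncomputable def trF {N : ℕ} (u v : Fin N → F4) : F4 :=
  ∑ i, (u i * v i ^ 2 + u i ^ 2 * v i)

/-- The trace inner product on (F_4^m)^{n₁} ≅ F_4^{m n₁}, read blockwise. -/
noncomputable def trB {n m : ℕ} (u v : Fin n → Fin m → F4) : F4 :=
  ∑ i, ∑ j, (u i j * v i j ^ 2 + u i j ^ 2 * v i j)

/-- Generalized concatenation of order s: a codeword is obtained from an
s-tuple b with b j in the j-th outer code by encoding each column
(b 1 l, ..., b s l) ∈ F_4^{sm} via the representative map ρ into C_s^⊥ and
adding an arbitrary element of C_s in each of the n₁ blocks. -/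
def gconcat {s m n₁ n₂ : ℕ} (Cs : Submodule (ZMod 2) (Fin n₂ → F4))
    (ρ : (Fin s → Fin m → F4) → (Fin n₂ → F4))
    (D : Fin s → Submodule (ZMod 2) (Fin n₁ → Fin m → F4)) :
    Set (Fin n₁ → Fin n₂ → F4) :=
  {c | ∃ b : Fin s → Fin n₁ → Fin m → F4,
        (∀ j, b j ∈ D j) ∧ ∀ l, c l - ρ (fun j => b j l) ∈ Cs}

lemma trF_add' {N : ℕ} (u v w : Fin N → F4) :
    trF (u + v) w = trF u w + trF v w := by
  simp only [trF, Pi.add_apply]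
  rw [← Finset.sum_add_distrib]
  refine Finset.sum_congr rfl fun i _ => ?_
  have h2 : (u i + v i) ^ 2 = u i ^ 2 + v i ^ 2 := add_pow_char (u i) (v i) 2
  rw [h2]; ring

/-- minimum distance of generalized concatenated quantum codes
(Lemma 2): every vector of C^⊥ \ C has Hamming weight at least
min_{1≤j≤s} δ_j n₂ (k_j + 1), where d2 j stands for δ_j n₂. -/
theorem generalized_concatenated_distance (s m n₁ n₂ : ℕ) (hs : 0 < s)
    (k d2 : Fin s → ℕ)
    -- outer codes B_j ⊆ B_j^⊥ (Bs j is B_j, Bd j is B_j^⊥)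
    (Bs Bd : Fin s → Submodule (ZMod 2) (Fin n₁ → Fin m → F4))
    (hBsub : ∀ j, Bs j ≤ Bd j)
    (hBdual : ∀ j, ∀ b : Fin n₁ → Fin m → F4,
        b ∈ Bd j ↔ ∀ w ∈ Bs j, trB b w = 0)
    -- every nonzero codeword of B_j^⊥ has at least k_j + 1 nonzero blocks
    (houter : ∀ j, ∀ b ∈ Bd j, b ≠ 0 → k j + 1 ≤ Nat.card {l : Fin n₁ // b l ≠ 0})
    -- nested inner codes C_s ⊆ ... ⊆ C_1
    (Cc : Fin s → Submodule (ZMod 2) (Fin n₂ → F4))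
    (hnest : ∀ i j : Fin s, i ≤ j → Cc j ≤ Cc i)
    (hCso : ∀ j, ∀ u ∈ Cc j, ∀ w ∈ Cc j, trF u w = 0)
    -- every vector of C_j^⊥ \ C_j has Hamming weight ≥ δ_j n₂ = d2 j
    (hinner : ∀ j, ∀ u : Fin n₂ → F4, (∀ w ∈ Cc j, trF u w = 0) → u ∉ Cc j →
        d2 j ≤ Nat.card {i : Fin n₂ // u i ≠ 0})
    -- compatible symplectic identification ρ : F_4^{sm} → C_s^⊥/C_s
    (ρ : (Fin s → Fin m → F4) → (Fin n₂ → F4))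
    (hρ0 : ρ 0 ∈ Cc ⟨s - 1, by omega⟩)
    -- ρ maps the first j block-groups into π_s(C_j^⊥)
    (hρmem : ∀ (v : Fin s → Fin m → F4) (j : Fin s), (∀ l, j < l → v l = 0) →
        ∀ w ∈ Cc j, trF (ρ v) w = 0)
    (hρnot : ∀ (v : Fin s → Fin m → F4) (j : Fin s), (∀ l, j < l → v l = 0) →
        v ≠ 0 → ρ v ∉ Cc j) :
    ∀ c ∈ gconcat (Cc ⟨s - 1, by omega⟩) ρ Bd,
      c ∉ gconcat (Cc ⟨s - 1, by omega⟩) ρ Bs →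
      Finset.univ.inf'
          (Finset.univ_nonempty_iff.mpr (Fin.pos_iff_nonempty.mp hs))
          (fun j => d2 j * (k j + 1)) ≤
        Nat.card {p : Fin n₁ × Fin n₂ // c p.1 p.2 ≠ 0} := by
  classical
  intro c hc hcn
  obtain ⟨b, hb, hbl⟩ := hc
  by_cases hb0 : ∀ j, b j = 0
  · exfalso
    apply hcn
    refine ⟨0, fun j => (Bs j).zero_mem, fun l => ?_⟩
    have heq : (fun j => b j l) = (fun j => (0 : Fin s → Fin n₁ → Fin m → F4) j l) := by
      funext j; simp [hb0 j]
    have := hbl l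
    rwa [heq] at this
  push_neg at hb0
  set T : Finset (Fin s) := Finset.univ.filter (fun j => b j ≠ 0) with hT
  have hTne : T.Nonempty := by
    obtain ⟨j, hj⟩ := hb0
    exact ⟨j, by simp [hT, hj]⟩
  set j : Fin s := T.max' hTne with hjdef
  have hjmem : b j ≠ 0 := by
    have := T.max'_mem hTne
    simpa [hT] using this
  have hjmax : ∀ i : Fin s, j < i → b i = 0 := by
    intro i hi
    by_contra h
    exact absurd (T.le_max' i (by simp [hT, h])) (not_le.mpr hi)
  have hsub : Cc ⟨s - 1, by omega⟩ ≤ Cc j := by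
    refine hnest j ⟨s - 1, by omega⟩ ?_
    have := j.isLt
    rw [Fin.le_def]
    show j.val ≤ s - 1
    omega
  have key : ∀ l : Fin n₁, b j l ≠ 0 →
      d2 j ≤ (Finset.univ.filter fun i => c l i ≠ 0).card := by
    intro l hl
    set v : Fin s → Fin m → F4 := fun i => b i l with hv
    have hvz : ∀ i, j < i → v i = 0 := fun i hi => by simp [hv, hjmax i hi]
    have hvne : v ≠ 0 := fun h => hl (by simpa [hv] using congrFun h j)
    have hcs : c l - ρ v ∈ Cc ⟨s - 1, by omega⟩ := hbl l
    have horth : ∀ w ∈ Cc j, trF (c l) w = 0 := by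
      intro w hw
      have hcl : c l = ρ v + (c l - ρ v) := by
        rw [add_sub_cancel]
      rw [hcl, trF_add', hρmem v j hvz w hw,
        hCso j _ (hsub hcs) w hw, add_zero]
    have hnot : c l ∉ Cc j := by
      intro hmem
      apply hρnot v j hvz hvne
      have : ρ v = c l - (c l - ρ v) := by rw [sub_sub_cancel]
      rw [this]
      exact (Cc j).sub_mem hmem (hsub hcs)
    have := hinner j (c l) horth hnot
    rwa [Nat.card_eq_fintype_card, Fintype.card_subtype] at this
  have hS : k j + 1 ≤ (Finset.univ.filter fun l => b j l ≠ 0).card := by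
    have := houter j (b j) (hb j) hjmem
    rwa [Nat.card_eq_fintype_card, Fintype.card_subtype] at this
  have htotal : Nat.card {p : Fin n₁ × Fin n₂ // c p.1 p.2 ≠ 0}
      = ∑ l : Fin n₁, (Finset.univ.filter fun i => c l i ≠ 0).card := by
    rw [Nat.card_eq_fintype_card, Fintype.card_subtype, Finset.card_filter,
      Fintype.sum_prod_type]
    exact Finset.sum_congr rfl fun l _ => (Finset.card_filter _ _).symm
  have hsum : (Finset.univ.filter fun l => b j l ≠ 0).card * d2 j ≤
      ∑ l : Fin n₁, (Finset.univ.filter fun i => c l i ≠ 0).card := by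
    calc (Finset.univ.filter fun l => b j l ≠ 0).card * d2 j
        ≤ ∑ l ∈ Finset.univ.filter (fun l => b j l ≠ 0),
            (Finset.univ.filter fun i => c l i ≠ 0).card := by
          have := Finset.card_nsmul_le_sum
            (Finset.univ.filter fun l => b j l ≠ 0)
            (fun l => (Finset.univ.filter fun i => c l i ≠ 0).card) (d2 j)
            (fun l hl => key l (by simpa using hl))
          simpa [smul_eq_mul] using this
      _ ≤ ∑ l : Fin n₁, (Finset.univ.filter fun i => c l i ≠ 0).card :=
          Finset.sum_le_sum_of_subset (Finset.filter_subset _ _)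
  calc Finset.univ.inf'
        (Finset.univ_nonempty_iff.mpr (Fin.pos_iff_nonempty.mp hs))
        (fun j => d2 j * (k j + 1))
      ≤ d2 j * (k j + 1) := Finset.inf'_le _ (Finset.mem_univ j)
    _ ≤ d2 j * (Finset.univ.filter fun l => b j l ≠ 0).card :=
        Nat.mul_le_mul_left _ hS
    _ = (Finset.univ.filter fun l => b j l ≠ 0).card * d2 j := Nat.mul_comm _ _
    _ ≤ ∑ l : Fin n₁, (Finset.univ.filter fun i => c l i ≠ 0).card := hsum
    _ = Nat.card {p : Fin n₁ × Fin n₂ // c p.1 p.2 ≠ 0} := htotal.symm
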